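/- arXiv:2405.20345 — 7 statements merged into one kernel-verified Lean document; each statement's English description precedes it below -/
import Mathlib

section
/- One has 0 < b < 1, where b = sqrt( (−96γ + sqrt((96γ)² + 4(16γ − 3k²)(10γ − 3k²))) / (2(10γ − 3k²)) ). -/
/-- `0 < b < 1`, where `b` is the first degeneracy instant of the canonical
variation on the Aloff–Wallach space `W⁷_{k,l}`. -/
theorem aloff_wallach_b_mem_Ioo (k l : ℤ) (hkl : k > l) (hl : 0 < l)
    (hgcd : Int.gcd k l = 1)
    (γ : ℝ) (hγ : γ = (k : ℝ) ^ 2 + (k : ℝ) * (l : ℝ) + (l : ℝ) ^ 2)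
    (b : ℝ)
    (hb : b = Real.sqrt ((-96 * γ +
        Real.sqrt ((96 * γ) ^ 2 +
          4 * (16 * γ - 3 * (k : ℝ) ^ 2) * (10 * γ - 3 * (k : ℝ) ^ 2))) /
        (2 * (10 * γ - 3 * (k : ℝ) ^ 2)))) :
    0 < b ∧ b < 1 := by
  have hlR : (1 : ℝ) ≤ (l : ℝ) := by exact_mod_cast hl
  have hkR : (l : ℝ) < (k : ℝ) := by exact_mod_cast hkl
  have hk2 : (k : ℝ) ^ 2 < γ := by nlinarith
  have hγpos : 0 < γ := by nlinarith
  have hA : 0 < 10 * γ - 3 * (k : ℝ) ^ 2 := by nlinarith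
  have hB : 0 < 16 * γ - 3 * (k : ℝ) ^ 2 := by nlinarith
  set A := 10 * γ - 3 * (k : ℝ) ^ 2 with hAdef
  set B := 16 * γ - 3 * (k : ℝ) ^ 2 with hBdef
  set x := (96 * γ) ^ 2 + 4 * B * A with hxdef
  have hxnn : 0 ≤ x := by positivity
  have hD : 96 * γ < Real.sqrt x := by
    rw [show (96 * γ) = Real.sqrt ((96 * γ)^2) by
      rw [Real.sqrt_sq (by positivity)]]
    apply Real.sqrt_lt_sqrt (by positivity)
    nlinarith
  have hnum : 0 < -96 * γ + Real.sqrt x := by linarith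
  have hden : 0 < 2 * A := by linarith
  have hinner : 0 < (-96 * γ + Real.sqrt x) / (2 * A) := div_pos hnum hden
  constructor
  · rw [hb]; exact Real.sqrt_pos.mpr hinner
  · rw [hb]
    have hlt1 : (-96 * γ + Real.sqrt x) / (2 * A) < 1 := by
      rw [div_lt_one hden]
      have hD2 : Real.sqrt x < 96 * γ + 2 * A := by
        have := Real.sqrt_lt' (x := x) (y := 96 * γ + 2 * A) (by linarith)
        rw [this]
        nlinarith
      linarith
    calc Real.sqrt ((-96 * γ + Real.sqrt x) / (2 * A)) < Real.sqrt 1 := by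
          apply Real.sqrt_lt_sqrt (le_of_lt hinner) hlt1
      _ = 1 := Real.sqrt_one
end

section
/- For every t with 0 < t ≤ 1, one has scal_g(t)/6 < 1 if and only if b < t. (Consequently there are no degeneracy instants for the family g_t in the interval (b, 1], since the first positive eigenvalue of the Laplacian satisfies λ₁(t) ≥ 1 there.) -/
/-- For `0 < t ≤ 1`, one has `scal_g(t)/6 < 1` if and only if `b < t`. -/
theorem aloff_wallach_scal_g_lt_one_iff (k l : ℤ) (hkl : k > l) (hl : 0 < l)
    (hgcd : Int.gcd k l = 1)
    (γ : ℝ) (hγ : γ = (k : ℝ) ^ 2 + (k : ℝ) * (l : ℝ) + (l : ℝ) ^ 2)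
    (scal_g : ℝ → ℝ)
    (hscal : ∀ t > 0, scal_g t =
      -((10 * γ - 3 * (k : ℝ) ^ 2) * t ^ 2) / (24 * γ) +
        (16 * γ - 3 * (k : ℝ) ^ 2) / (24 * γ * t ^ 2) + 2)
    (b : ℝ)
    (hb : b = Real.sqrt ((-96 * γ +
        Real.sqrt ((96 * γ) ^ 2 +
          4 * (16 * γ - 3 * (k : ℝ) ^ 2) * (10 * γ - 3 * (k : ℝ) ^ 2))) /
        (2 * (10 * γ - 3 * (k : ℝ) ^ 2)))) :
    ∀ t : ℝ, 0 < t → t ≤ 1 → (scal_g t / 6 < 1 ↔ b < t) := by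
  intro t ht ht1
  have hk : (0:ℝ) < (k:ℝ) := by exact_mod_cast lt_trans hl hkl
  have hlr : (0:ℝ) < (l:ℝ) := by exact_mod_cast hl
  have hγpos : 0 < γ := by rw [hγ]; positivity
  have hA : 0 < 10 * γ - 3 * (k:ℝ)^2 := by nlinarith [mul_pos hk hlr, sq_nonneg (l:ℝ)]
  have hB : 0 < 16 * γ - 3 * (k:ℝ)^2 := by nlinarith [mul_pos hk hlr, sq_nonneg (l:ℝ)]
  set A := 10 * γ - 3 * (k:ℝ)^2 with hAdef
  set B := 16 * γ - 3 * (k:ℝ)^2 with hBdef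
  set D := (96 * γ) ^ 2 + 4 * B * A with hDdef
  have hD : 0 < D := by positivity
  set s := Real.sqrt D with hsdef
  have hs2 : s ^ 2 = D := Real.sq_sqrt hD.le
  have hsnn : 0 ≤ s := Real.sqrt_nonneg _
  have hsgt : 96 * γ < s := by nlinarith [mul_pos hB hA]
  have hnum : 0 < -96 * γ + s := by linarith
  have h2A : 0 < 2 * A := by linarith
  have hb2 : b ^ 2 = (-96 * γ + s) / (2 * A) := by
    rw [hb]; exact Real.sq_sqrt (le_of_lt (div_pos hnum h2A))
  have hbpos : 0 < b := by
    rw [hb]; exact Real.sqrt_pos.mpr (div_pos hnum h2A)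
  have hroot : A * (b ^ 2) ^ 2 + 96 * γ * b ^ 2 - B = 0 := by
    rw [hb2]
    field_simp
    nlinarith [hs2]
  -- identity for scal
  have htne : t ≠ 0 := ne_of_gt ht
  have hident : scal_g t - 6 = -(A * t ^ 4 + 96 * γ * t ^ 2 - B) / (24 * γ * t ^ 2) := by
    rw [hscal t ht]
    field_simp
    ring
  have hden : 0 < 24 * γ * t ^ 2 := by positivity
  have hequiv : scal_g t / 6 < 1 ↔ 0 < A * t ^ 4 + 96 * γ * t ^ 2 - B := by
    rw [div_lt_one (by norm_num : (0:ℝ) < 6)]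
    constructor
    · intro h
      have h6 : scal_g t - 6 < 0 := by linarith
      rw [hident] at h6
      have := (div_neg_iff).mp h6
      rcases this with ⟨h1, h2⟩ | ⟨h1, h2⟩
      · linarith
      · linarith
    · intro h
      have : -(A * t ^ 4 + 96 * γ * t ^ 2 - B) / (24 * γ * t ^ 2) < 0 :=
        div_neg_of_neg_of_pos (by linarith) hden
      rw [← hident] at this
      linarith
  have key : A * t ^ 4 + 96 * γ * t ^ 2 - B =
      (A * (b ^ 2) ^ 2 + 96 * γ * b ^ 2 - B) +
        (t ^ 2 - b ^ 2) * (A * (t ^ 2 + b ^ 2) + 96 * γ) := by ring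
  have hfac : 0 < A * (t ^ 2 + b ^ 2) + 96 * γ := by positivity
  rw [hequiv, key, hroot, zero_add]
  constructor
  · intro h
    by_contra h'
    push_neg at h'
    have h1 : t ^ 2 ≤ b ^ 2 := pow_le_pow_left₀ ht.le h' 2
    have h2 : 0 ≤ (b ^ 2 - t ^ 2) * (A * (t ^ 2 + b ^ 2) + 96 * γ) :=
      mul_nonneg (sub_nonneg.mpr h1) hfac.le
    have heq : (t ^ 2 - b ^ 2) * (A * (t ^ 2 + b ^ 2) + 96 * γ) =
        -((b ^ 2 - t ^ 2) * (A * (t ^ 2 + b ^ 2) + 96 * γ)) := by ring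
    rw [heq] at h
    linarith
  · intro h
    have h1 : b ^ 2 < t ^ 2 := pow_lt_pow_left₀ h hbpos.le (by norm_num)
    exact mul_pos (by linarith) hfac
end

section
/- The function f defined on (0, 1] by f(t) = scal_g(t)/6 − 1 − 8·(1/t² − 1) is strictly increasing on (0, 1], and f(1) = −5/8. -/
/-- The function `f(t) = scal_g(t)/6 − 1 − 8(1/t² − 1)` is strictly increasing
on `(0, 1]` and `f(1) = −5/8`. -/
theorem aloff_wallach_f_strictMono (k l : ℤ) (hkl : k > l) (hl : 0 < l)
    (hgcd : Int.gcd k l = 1)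
    (γ : ℝ) (hγ : γ = (k : ℝ) ^ 2 + (k : ℝ) * (l : ℝ) + (l : ℝ) ^ 2)
    (scal_g : ℝ → ℝ)
    (hscal : ∀ t > 0, scal_g t =
      -((10 * γ - 3 * (k : ℝ) ^ 2) * t ^ 2) / (24 * γ) +
        (16 * γ - 3 * (k : ℝ) ^ 2) / (24 * γ * t ^ 2) + 2)
    (f : ℝ → ℝ)
    (hf : ∀ t, f t = scal_g t / 6 - 1 - 8 * (1 / t ^ 2 - 1)) :
    StrictMonoOn f (Set.Ioc 0 1) ∧ f 1 = -5 / 8 := by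
  have hlr : (1 : ℝ) ≤ (l : ℝ) := by exact_mod_cast hl
  have hkr : (l : ℝ) < (k : ℝ) := by exact_mod_cast hkl
  have hγpos : 0 < γ := by nlinarith
  have hγne : γ ≠ 0 := ne_of_gt hγpos
  have key : ∀ t : ℝ, 0 < t → f t =
      ((3 * (k : ℝ) ^ 2 - 10 * γ) * t ^ 4 + 1056 * γ * t ^ 2
        - (1136 * γ + 3 * (k : ℝ) ^ 2)) / (144 * γ * t ^ 2) := by
    intro t ht
    have htne : t ≠ 0 := ne_of_gt ht
    rw [hf, hscal t ht]
    field_simp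
    ring
  constructor
  · intro a ha b hb hab
    rw [key a ha.1, key b hb.1]
    have ha1 := ha.1
    have hb1 := hb.1
    have hb2 := hb.2
    have ha2 : a ≤ 1 := le_of_lt (lt_of_lt_of_le hab hb2)
    have hsub : 0 < b ^ 2 - a ^ 2 := by nlinarith
    have ha21 : a ^ 2 ≤ 1 := by nlinarith
    have hb21 : b ^ 2 ≤ 1 := by nlinarith
    have hab1 : a ^ 2 * b ^ 2 ≤ 1 := mul_le_one₀ ha21 (sq_nonneg b) hb21
    have hA : 3 * (k : ℝ) ^ 2 - 10 * γ < 0 := by nlinarith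
    have hmain : 0 < (b ^ 2 - a ^ 2) *
        ((3 * (k : ℝ) ^ 2 - 10 * γ) * (a ^ 2 * b ^ 2) + (1136 * γ + 3 * (k : ℝ) ^ 2)) := by
      apply mul_pos hsub
      nlinarith [mul_nonneg (le_of_lt (neg_pos.mpr hA)) (sub_nonneg.mpr hab1)]
    have h144 : (0:ℝ) < 144 * γ := by positivity
    rw [div_lt_div_iff₀ (by positivity) (by positivity)]
    nlinarith [mul_pos h144 hmain]
  · rw [key 1 one_pos]
    field_simp
    ring
end

section
/- For every real number c ≥ 8, the function φ_c defined by φ_c(t) = scal_g(t)/6 − c·(1/t² − 1) is strictly increasing on (0, 1) and satisfies φ_c(t) < 0 for all t with 0 < t < b; in particular, scal_g(t)/6 < c·(1/t² − 1) for all 0 < t < b and all c ≥ 8. -/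
set_option maxHeartbeats 1000000

/-- For every `c ≥ 8`, the function `φ_c(t) = scal_g(t)/6 − c(1/t² − 1)` is
strictly increasing on `(0, 1)` and negative on `(0, b)`; in particular
`scal_g(t)/6 < c(1/t² − 1)` there. -/
theorem aloff_wallach_phi_c (k l : ℤ) (hkl : k > l) (hl : 0 < l)
    (hgcd : Int.gcd k l = 1)
    (γ : ℝ) (hγ : γ = (k : ℝ) ^ 2 + (k : ℝ) * (l : ℝ) + (l : ℝ) ^ 2)
    (scal_g : ℝ → ℝ)
    (hscal : ∀ t > 0, scal_g t =
      -((10 * γ - 3 * (k : ℝ) ^ 2) * t ^ 2) / (24 * γ) +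
        (16 * γ - 3 * (k : ℝ) ^ 2) / (24 * γ * t ^ 2) + 2)
    (b : ℝ)
    (hb : b = Real.sqrt ((-96 * γ +
        Real.sqrt ((96 * γ) ^ 2 +
          4 * (16 * γ - 3 * (k : ℝ) ^ 2) * (10 * γ - 3 * (k : ℝ) ^ 2))) /
        (2 * (10 * γ - 3 * (k : ℝ) ^ 2)))) :
    ∀ c : ℝ, 8 ≤ c →
      StrictMonoOn (fun t => scal_g t / 6 - c * (1 / t ^ 2 - 1)) (Set.Ioo 0 1) ∧
      (∀ t : ℝ, 0 < t → t < b →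
        scal_g t / 6 - c * (1 / t ^ 2 - 1) < 0 ∧
          scal_g t / 6 < c * (1 / t ^ 2 - 1)) := by
  -- basic facts about k, l, γ
  have hl1 : (1 : ℝ) ≤ (l : ℝ) := by exact_mod_cast hl
  have hk2 : (2 : ℝ) ≤ (k : ℝ) := by
    have h : l + 1 ≤ k := hkl
    have h2 : ((l : ℝ) + 1) ≤ (k : ℝ) := by exact_mod_cast h
    linarith
  have hKpos : (0 : ℝ) < (k : ℝ) ^ 2 := by nlinarith
  have hK : (k : ℝ) ^ 2 + 3 ≤ γ := by
    have hkl2 : (2 : ℝ) ≤ (k : ℝ) * (l : ℝ) := by nlinarith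
    nlinarith [sq_nonneg ((l : ℝ) - 1)]
  have hγpos : 0 < γ := by nlinarith
  have hApos : 0 < 10 * γ - 3 * (k : ℝ) ^ 2 := by nlinarith
  have hBpos : 0 < 16 * γ - 3 * (k : ℝ) ^ 2 := by nlinarith
  have hBle : 16 * γ - 3 * (k : ℝ) ^ 2 < 16 * γ := by nlinarith
  -- facts about b
  obtain ⟨S, hSdef⟩ : ∃ S : ℝ, S = (96 * γ) ^ 2 +
      4 * (16 * γ - 3 * (k : ℝ) ^ 2) * (10 * γ - 3 * (k : ℝ) ^ 2) := ⟨_, rfl⟩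
  rw [← hSdef] at hb
  have hS : (0 : ℝ) ≤ S := by
    rw [hSdef]; nlinarith [mul_pos hBpos hApos, sq_nonneg (96 * γ)]
  have hD2 : Real.sqrt S ^ 2 = S := Real.sq_sqrt hS
  have hDgt : 96 * γ < Real.sqrt S := by
    have h1 : Real.sqrt ((96 * γ) ^ 2) < Real.sqrt S := by
      apply Real.sqrt_lt_sqrt (by positivity)
      nlinarith [mul_pos hBpos hApos]
    rwa [Real.sqrt_sq (by positivity : (0:ℝ) ≤ 96 * γ)] at h1
  have hbin : 0 < (-96 * γ + Real.sqrt S) / (2 * (10 * γ - 3 * (k : ℝ) ^ 2)) :=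
    div_pos (by linarith) (by linarith)
  have hbpos : 0 < b := by rw [hb]; exact Real.sqrt_pos.2 hbin
  have hb2 : b ^ 2 = (-96 * γ + Real.sqrt S) / (2 * (10 * γ - 3 * (k : ℝ) ^ 2)) := by
    rw [hb]; exact Real.sq_sqrt hbin.le
  have hAne : (2 * (10 * γ - 3 * (k : ℝ) ^ 2)) ≠ 0 := by positivity
  have h1 : 2 * (10 * γ - 3 * (k : ℝ) ^ 2) * b ^ 2 = -96 * γ + Real.sqrt S := by
    rw [hb2]; field_simp
  have h2 : (2 * (10 * γ - 3 * (k : ℝ) ^ 2) * b ^ 2 + 96 * γ) ^ 2 = S := by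
    have : 2 * (10 * γ - 3 * (k : ℝ) ^ 2) * b ^ 2 + 96 * γ = Real.sqrt S := by
      linarith
    rw [this, hD2]
  have h3 : 4 * (10 * γ - 3 * (k : ℝ) ^ 2) *
      ((10 * γ - 3 * (k : ℝ) ^ 2) * b ^ 4 + 96 * γ * b ^ 2 -
        (16 * γ - 3 * (k : ℝ) ^ 2)) = 0 := by
    have h2' := h2
    rw [hSdef] at h2'
    linear_combination h2'
  have hbkey : (10 * γ - 3 * (k : ℝ) ^ 2) * b ^ 4 + 96 * γ * b ^ 2 =
      16 * γ - 3 * (k : ℝ) ^ 2 := by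
    rcases mul_eq_zero.mp h3 with h | h
    · exfalso; nlinarith
    · linarith
  have hb2le : b ^ 2 ≤ 1 / 6 := by
    nlinarith [mul_nonneg hApos.le (pow_nonneg hbpos.le 4), hγpos]
  have hblt1 : b < 1 := by
    have hsq : b ^ 2 < 1 ^ 2 := by linarith
    exact lt_of_pow_lt_pow_left₀ 2 zero_le_one hsq
  intro c hc
  constructor
  · -- strict monotonicity on (0,1)
    intro x hx y hy hxy
    obtain ⟨hx0, hx1⟩ := hx
    obtain ⟨hy0, hy1⟩ := hy
    show scal_g x / 6 - c * (1 / x ^ 2 - 1) < scal_g y / 6 - c * (1 / y ^ 2 - 1)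
    rw [hscal x hx0, hscal y hy0]
    rw [← sub_pos]
    have expand :
        (-((10 * γ - 3 * (k : ℝ) ^ 2) * y ^ 2) / (24 * γ) +
            (16 * γ - 3 * (k : ℝ) ^ 2) / (24 * γ * y ^ 2) + 2) / 6 -
          c * (1 / y ^ 2 - 1) -
          ((-((10 * γ - 3 * (k : ℝ) ^ 2) * x ^ 2) / (24 * γ) +
            (16 * γ - 3 * (k : ℝ) ^ 2) / (24 * γ * x ^ 2) + 2) / 6 -
          c * (1 / x ^ 2 - 1)) =
          ((y ^ 2 - x ^ 2) * (144 * γ * c - (16 * γ - 3 * (k : ℝ) ^ 2) -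
            (10 * γ - 3 * (k : ℝ) ^ 2) * x ^ 2 * y ^ 2)) /
            (144 * γ * x ^ 2 * y ^ 2) := by
      field_simp
      ring
    rw [expand]
    apply div_pos
    · have hsq : 0 < y ^ 2 - x ^ 2 := by
        linarith [mul_self_lt_mul_self hx0.le hxy]
      have hxyl : x * y < 1 := by
        have := mul_lt_mul'' hx1 hy1 hx0.le hy0.le
        linarith
      have hxy1 : x ^ 2 * y ^ 2 < 1 := by
        have h0 : 0 < x * y := mul_pos hx0 hy0
        have := mul_lt_mul'' hxyl hxyl h0.le h0.le
        nlinarith [this]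
      have hfac : 0 < 144 * γ * c - (16 * γ - 3 * (k : ℝ) ^ 2) -
          (10 * γ - 3 * (k : ℝ) ^ 2) * x ^ 2 * y ^ 2 := by
        have hA1 : (10 * γ - 3 * (k : ℝ) ^ 2) * (x ^ 2 * y ^ 2) <
            (10 * γ - 3 * (k : ℝ) ^ 2) * 1 :=
          mul_lt_mul_of_pos_left hxy1 hApos
        have hγc : 0 ≤ γ * (c - 8) := mul_nonneg hγpos.le (by linarith)
        linarith [hA1, hγc, hγpos, hKpos]
      exact mul_pos hsq hfac
    · positivity
  · -- negativity on (0, b)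
    intro t ht0 htb
    have ht2b : t ^ 2 < b ^ 2 := by
      linarith [mul_self_lt_mul_self ht0.le htb]
    have ht1 : t < 1 := lt_trans htb hblt1
    have hmain : scal_g t / 6 - c * (1 / t ^ 2 - 1) < 0 := by
      rw [hscal t ht0]
      have expand :
          (-((10 * γ - 3 * (k : ℝ) ^ 2) * t ^ 2) / (24 * γ) +
              (16 * γ - 3 * (k : ℝ) ^ 2) / (24 * γ * t ^ 2) + 2) / 6 -
            c * (1 / t ^ 2 - 1) =
            (-(10 * γ - 3 * (k : ℝ) ^ 2) * t ^ 4 + (48 * γ + 144 * γ * c) * t ^ 2 +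
              (16 * γ - 3 * (k : ℝ) ^ 2) - 144 * γ * c) / (144 * γ * t ^ 2) := by
        field_simp
        ring
      rw [expand]
      apply div_neg_of_neg_of_pos
      · have hsum : b ^ 2 + t ^ 2 < 1 / 3 := by linarith
        have h3' : 0 < 1200 * γ - (10 * γ - 3 * (k : ℝ) ^ 2) * (b ^ 2 + t ^ 2) := by
          linarith [mul_lt_mul_of_pos_left hsum hApos, hγpos, hKpos]
        have h4 : 0 < (b ^ 2 - t ^ 2) *
            (1200 * γ - (10 * γ - 3 * (k : ℝ) ^ 2) * (b ^ 2 + t ^ 2)) :=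
          mul_pos (by linarith) h3'
        have hγb : γ * b ^ 2 ≤ γ * (1 / 6) :=
          mul_le_mul_of_nonneg_left hb2le hγpos.le
        have h5 : -(10 * γ - 3 * (k : ℝ) ^ 2) * t ^ 4 + 1200 * γ * t ^ 2 +
            (16 * γ - 3 * (k : ℝ) ^ 2) - 1152 * γ < 0 := by
          linarith [h4, hbkey, hγb, hγpos]
        have h6 : 0 ≤ γ * (c - 8) * (1 - t ^ 2) :=
          mul_nonneg (mul_nonneg hγpos.le (by linarith))
            (by linarith [mul_self_lt_mul_self ht0.le ht1])
        linarith [h5, h6]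
      · positivity
    exact ⟨hmain, by linarith⟩
end

section
/- The sequence (t_q)_{q≥1} satisfies: t₁ = b; the sequence is strictly decreasing; 0 < t_q ≤ b for every q ≥ 1; and t_q → 0 as q → ∞. -/
lemma aw_sqrt_gt_neg (M u : ℝ) (hM : 0 < M) : -u < Real.sqrt (u ^ 2 + M) := by
  have hs := Real.sq_sqrt (show (0:ℝ) ≤ u ^ 2 + M by positivity)
  have hn := Real.sqrt_nonneg (u ^ 2 + M)
  nlinarith

lemma aw_pos (M u : ℝ) (hM : 0 < M) : 0 < u + Real.sqrt (u ^ 2 + M) := by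
  have := aw_sqrt_gt_neg M u hM; linarith

lemma aw_mono (M : ℝ) (hM : 0 < M) {u v : ℝ} (h : u < v) :
    u + Real.sqrt (u ^ 2 + M) < v + Real.sqrt (v ^ 2 + M) := by
  have hsu := Real.sq_sqrt (show (0:ℝ) ≤ u ^ 2 + M by positivity)
  have hsv := Real.sq_sqrt (show (0:ℝ) ≤ v ^ 2 + M by positivity)
  have h1 := aw_sqrt_gt_neg M u hM
  have h2 := aw_sqrt_gt_neg M v hM
  have hnu := Real.sqrt_nonneg (u ^ 2 + M)
  have hnv := Real.sqrt_nonneg (v ^ 2 + M)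
  nlinarith [mul_pos (sub_pos.mpr h)
    (show (0:ℝ) < Real.sqrt (u ^ 2 + M) + Real.sqrt (v ^ 2 + M) + u + v by linarith)]

lemma aw_bound (M u : ℝ) (hM : 0 < M) (hu : u < 0) :
    u + Real.sqrt (u ^ 2 + M) ≤ M / (-2 * u) := by
  have hs := Real.sq_sqrt (show (0:ℝ) ≤ u ^ 2 + M by positivity)
  rw [le_div_iff₀ (by linarith : (0:ℝ) < -2 * u)]
  nlinarith [sq_nonneg (Real.sqrt (u ^ 2 + M) + u)]

/-- The degeneracy instants `t_q` of the canonical variation `g_t` on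
`W⁷_{k,l}` satisfy `t₁ = b`, they are strictly decreasing, `0 < t_q ≤ b`,
and `t_q → 0`. -/
theorem aloff_wallach_degeneracy_seq (k l : ℤ) (hkl : k > l) (hl : 0 < l)
    (hgcd : Int.gcd k l = 1)
    (γ : ℝ) (hγ : γ = (k : ℝ) ^ 2 + (k : ℝ) * (l : ℝ) + (l : ℝ) ^ 2)
    (b : ℝ)
    (hb : b = Real.sqrt ((-96 * γ +
        Real.sqrt ((96 * γ) ^ 2 +
          4 * (16 * γ - 3 * (k : ℝ) ^ 2) * (10 * γ - 3 * (k : ℝ) ^ 2))) /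
        (2 * (10 * γ - 3 * (k : ℝ) ^ 2))))
    (tseq : ℕ → ℝ)
    (htseq : ∀ q : ℕ, 1 ≤ q → tseq q =
      (1 / Real.sqrt (2 * (10 * γ - 3 * (k : ℝ) ^ 2))) *
        Real.sqrt (48 * γ * (1 - 2 * (q : ℝ) - (q : ℝ) ^ 2) +
          Real.sqrt ((48 * γ) ^ 2 * (1 - 2 * (q : ℝ) - (q : ℝ) ^ 2) ^ 2 -
            4 * (3 * (k : ℝ) ^ 2 - 10 * γ) * (16 * γ - 3 * (k : ℝ) ^ 2)))) :
    tseq 1 = b ∧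
      (∀ q p : ℕ, 1 ≤ q → q < p → tseq p < tseq q) ∧
      (∀ q : ℕ, 1 ≤ q → 0 < tseq q ∧ tseq q ≤ b) ∧
      Filter.Tendsto tseq Filter.atTop (nhds 0) := by
  have hk1 : (1:ℝ) ≤ (k:ℝ) := by exact_mod_cast (by omega : (1:ℤ) ≤ k)
  have hl1 : (1:ℝ) ≤ (l:ℝ) := by exact_mod_cast hl
  have hγk : (k:ℝ) ^ 2 < γ := by rw [hγ]; nlinarith
  have hγ0 : 0 < γ := by nlinarith
  have hA : 0 < 10 * γ - 3 * (k:ℝ) ^ 2 := by nlinarith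
  have hB : 0 < 16 * γ - 3 * (k:ℝ) ^ 2 := by nlinarith
  set A := 10 * γ - 3 * (k:ℝ) ^ 2 with hAdef
  set B := 16 * γ - 3 * (k:ℝ) ^ 2 with hBdef
  set M := 4 * A * B with hMdef
  have hM : 0 < M := by positivity
  set c := Real.sqrt (2 * A) with hcdef
  have hc : 0 < c := Real.sqrt_pos.mpr (by linarith)
  -- rewrite the inner radicand
  have hE : ∀ q : ℕ, (48 * γ) ^ 2 * (1 - 2 * (q:ℝ) - (q:ℝ) ^ 2) ^ 2 -
      4 * (3 * (k:ℝ) ^ 2 - 10 * γ) * B =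
      (48 * γ * (1 - 2 * (q:ℝ) - (q:ℝ) ^ 2)) ^ 2 + M := by
    intro q; rw [hMdef, hAdef, hBdef]; ring
  have key : ∀ q : ℕ, 1 ≤ q → tseq q =
      Real.sqrt (48 * γ * (1 - 2 * (q:ℝ) - (q:ℝ) ^ 2) +
        Real.sqrt ((48 * γ * (1 - 2 * (q:ℝ) - (q:ℝ) ^ 2)) ^ 2 + M)) / c := by
    intro q hq
    rw [htseq q hq, hE q, one_div, inv_mul_eq_div]
  have hwneg : ∀ q : ℕ, 1 ≤ q → 48 * γ * (1 - 2 * (q:ℝ) - (q:ℝ) ^ 2) < 0 := by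
    intro q hq
    have hq1 : (1:ℝ) ≤ (q:ℝ) := by exact_mod_cast hq
    nlinarith
  have hpos : ∀ q : ℕ, 1 ≤ q → 0 < tseq q := by
    intro q hq
    rw [key q hq]
    exact div_pos (Real.sqrt_pos.mpr (aw_pos M _ hM)) hc
  have hmono : ∀ q p : ℕ, 1 ≤ q → q < p → tseq p < tseq q := by
    intro q p hq hqp
    have hp : 1 ≤ p := le_trans hq hqp.le
    rw [key q hq, key p hp]
    have hq1 : (1:ℝ) ≤ (q:ℝ) := by exact_mod_cast hq
    have hpq : (q:ℝ) < (p:ℝ) := by exact_mod_cast hqp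
    have hwlt : 48 * γ * (1 - 2 * (p:ℝ) - (p:ℝ) ^ 2) <
        48 * γ * (1 - 2 * (q:ℝ) - (q:ℝ) ^ 2) := by
      nlinarith [mul_pos hγ0 (mul_pos (sub_pos.mpr hpq)
        (show (0:ℝ) < 2 + (p:ℝ) + (q:ℝ) by positivity))]
    have := Real.sqrt_lt_sqrt (aw_pos M _ hM).le (aw_mono M hM hwlt)
    exact div_lt_div_of_pos_right this hc
  have hb1 : tseq 1 = b := by
    rw [key 1 le_rfl, hb]
    have hYX : (-96 * γ + Real.sqrt ((96 * γ) ^ 2 + 4 * B * A)) =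
        48 * γ * (1 - 2 * ((1:ℕ):ℝ) - ((1:ℕ):ℝ) ^ 2) +
          Real.sqrt ((48 * γ * (1 - 2 * ((1:ℕ):ℝ) - ((1:ℕ):ℝ) ^ 2)) ^ 2 + M) := by
      push_cast
      rw [show (96 * γ:ℝ) ^ 2 + 4 * B * A =
        (48 * γ * (1 - 2 * (1:ℝ) - (1:ℝ) ^ 2)) ^ 2 + M from by rw [hMdef]; ring]
      ring
    rw [hYX, Real.sqrt_div (aw_pos M _ hM).le, ← hcdef]
  refine ⟨hb1, hmono, fun q hq => ⟨hpos q hq, ?_⟩, ?_⟩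
  · rcases eq_or_lt_of_le hq with h | h
    · rw [← h, hb1]
    · exact le_of_lt (by rw [← hb1]; exact hmono 1 q le_rfl h)
  · have hup : ∀ q : ℕ, 1 ≤ q →
        tseq q ≤ (Real.sqrt (M / (96 * γ)) / c) / q := by
      intro q hq
      rw [key q hq]
      have hq1 : (1:ℝ) ≤ (q:ℝ) := by exact_mod_cast hq
      have hq0 : (0:ℝ) < (q:ℝ) := by linarith
      have hu := hwneg q hq
      set u := 48 * γ * (1 - 2 * (q:ℝ) - (q:ℝ) ^ 2) with hudef
      have h1 : u + Real.sqrt (u ^ 2 + M) ≤ M / (-2 * u) := aw_bound M u hM hu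
      have h2 : M / (-2 * u) ≤ M / (96 * γ * (q:ℝ) ^ 2) := by
        apply div_le_div_of_nonneg_left hM.le (by positivity)
        rw [hudef]; nlinarith
      have h3 := Real.sqrt_le_sqrt (h1.trans h2)
      have h4 : Real.sqrt (M / (96 * γ * (q:ℝ) ^ 2)) =
          Real.sqrt (M / (96 * γ)) / (q:ℝ) := by
        rw [show M / (96 * γ * (q:ℝ) ^ 2) = (M / (96 * γ)) / (q:ℝ) ^ 2 from by ring,
          Real.sqrt_div (by positivity), Real.sqrt_sq hq0.le]
      rw [h4] at h3
      calc Real.sqrt (u + Real.sqrt (u ^ 2 + M)) / c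
          ≤ (Real.sqrt (M / (96 * γ)) / (q:ℝ)) / c := by gcongr
        _ = (Real.sqrt (M / (96 * γ)) / c) / (q:ℝ) := by ring
    have hlim : Filter.Tendsto (fun q : ℕ => (Real.sqrt (M / (96 * γ)) / c) / (q:ℝ))
        Filter.atTop (nhds 0) := tendsto_const_div_atTop_nhds_zero_nat _
    refine squeeze_zero' ?_ ?_ hlim
    · filter_upwards [Filter.eventually_ge_atTop 1] with q hq
      exact (hpos q hq).le
    · filter_upwards [Filter.eventually_ge_atTop 1] with q hq
      exact hup q hq
end

section
/- For every integer q ≥ 1, one has scal_g(t_q)/6 = q(q+2)/3; that is, at the instant t_q the quantity scal_g(t_q)/(m−1) (with m = 7) equals the q-th positive eigenvalue β_q = q(q+2)/3 of the Laplacian of the base CP² = SU(3)/U(2) with the metric induced by the negative of the Cartan–Killing form of su(3). -/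
/-!
Put `x = t²`, `A = 10γ - 3k²`, `B = 16γ - 3k²` and `c = 48γ(1 - 2q - q²)`. Then
`t_q² = (c + √(c² + 4AB)) / (2A)` is the positive root of `A x² - c x - B = 0`, and on that
root `-A x + B / x = -c`, so `scal_g(t_q) = 2 - c / (24γ) = 2q(q + 2)`. All square roots are of
positive numbers because `γ`, `A` and `B` are positive definite binary quadratic forms in `(k, l)`.
-/

open Real

lemma binary_quadratic_form_pos {a b c : ℝ} (ha : 0 < a) (hdisc : b ^ 2 < 4 * a * c)
    (k : ℝ) {l : ℝ} (hl : l ≠ 0) : 0 < a * k ^ 2 + b * k * l + c * l ^ 2 := by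
  have hl2 : 0 < l ^ 2 := by positivity
  have hsq : 4 * a * (a * k ^ 2 + b * k * l + c * l ^ 2)
      = (2 * a * k + b * l) ^ 2 + (4 * a * c - b ^ 2) * l ^ 2 := by ring
  have : 0 < 4 * a * (a * k ^ 2 + b * k * l + c * l ^ 2) := by
    rw [hsq]; exact add_pos_of_nonneg_of_pos (sq_nonneg _) (mul_pos (sub_pos.2 hdisc) hl2)
  exact pos_of_mul_pos_right this (by positivity)

lemma add_sqrt_sq_add_mul_pos {a b : ℝ} (ha : 0 < a) (hb : 0 < b) (c : ℝ) :
    0 < c + √(c ^ 2 + 4 * (a * b)) := by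
  have h : |c| < √(c ^ 2 + 4 * (a * b)) := by
    rw [← sqrt_sq_eq_abs]
    exact sqrt_lt_sqrt (sq_nonneg c) (by nlinarith [mul_pos ha hb])
  linarith [neg_abs_le c]

lemma aloffWallach_forms_pos {k l γ : ℝ} (hl : l ≠ 0) (hγ : γ = k ^ 2 + k * l + l ^ 2) :
    0 < γ ∧ 0 < 10 * γ - 3 * k ^ 2 ∧ 0 < 16 * γ - 3 * k ^ 2 := by
  subst hγ
  refine ⟨?_, ?_, ?_⟩
  · linarith [binary_quadratic_form_pos (a := 1) (b := 1) (c := 1) one_pos (by norm_num) k hl]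
  · linarith [binary_quadratic_form_pos (a := 7) (b := 10) (c := 10) (by norm_num)
      (by norm_num) k hl]
  · linarith [binary_quadratic_form_pos (a := 13) (b := 16) (c := 16) (by norm_num)
      (by norm_num) k hl]

lemma quadratic_eq_zero_at_pos_root {a : ℝ} (ha : a ≠ 0) (b c : ℝ) {s : ℝ}
    (hs : s ^ 2 = c ^ 2 + 4 * (a * b)) :
    a * ((c + s) / (2 * a)) ^ 2 - c * ((c + s) / (2 * a)) - b = 0 := by
  field_simp
  linear_combination hs

lemma neg_mul_div_add_div_mul_add_eq_of_quadratic_eq_zero {a b c γ x : ℝ} (hx : x ≠ 0)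
    (h : a * x ^ 2 - c * x - b = 0) :
    -(a * x) / (24 * γ) + b / (24 * γ * x) + 2 = 2 - c / (24 * γ) := by
  rcases eq_or_ne γ 0 with rfl | hγ
  · simp
  field_simp
  linear_combination -h

lemma one_div_sqrt_mul_sqrt {u : ℝ} (hu : 0 ≤ u) (v : ℝ) : 1 / √u * √v = √(v / u) := by
  rw [sqrt_div' v hu, one_div_mul_eq_div]

theorem aloff_wallach_scal_at_degeneracy_general (k l : ℤ) (hl : 0 < l)
    (γ : ℝ) (hγ : γ = (k : ℝ) ^ 2 + (k : ℝ) * (l : ℝ) + (l : ℝ) ^ 2)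
    (scal_g : ℝ → ℝ)
    (hscal : ∀ t > 0, scal_g t =
      -((10 * γ - 3 * (k : ℝ) ^ 2) * t ^ 2) / (24 * γ) +
        (16 * γ - 3 * (k : ℝ) ^ 2) / (24 * γ * t ^ 2) + 2)
    (tseq : ℕ → ℝ)
    (htseq : ∀ q : ℕ, 1 ≤ q → tseq q =
      (1 / Real.sqrt (2 * (10 * γ - 3 * (k : ℝ) ^ 2))) *
        Real.sqrt (48 * γ * (1 - 2 * (q : ℝ) - (q : ℝ) ^ 2) +
          Real.sqrt ((48 * γ) ^ 2 * (1 - 2 * (q : ℝ) - (q : ℝ) ^ 2) ^ 2 -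
            4 * (3 * (k : ℝ) ^ 2 - 10 * γ) * (16 * γ - 3 * (k : ℝ) ^ 2)))) :
    ∀ q : ℕ, 1 ≤ q → scal_g (tseq q) / 6 = (q : ℝ) * ((q : ℝ) + 2) / 3 := by
  intro q hq
  obtain ⟨hγ0, hA, hB⟩ := aloffWallach_forms_pos (by exact_mod_cast hl.ne') hγ
  have hdisc : (48 * γ) ^ 2 * (1 - 2 * (q : ℝ) - (q : ℝ) ^ 2) ^ 2 -
      4 * (3 * (k : ℝ) ^ 2 - 10 * γ) * (16 * γ - 3 * (k : ℝ) ^ 2) =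
      (48 * γ * (1 - 2 * (q : ℝ) - (q : ℝ) ^ 2)) ^ 2 +
        4 * ((10 * γ - 3 * (k : ℝ) ^ 2) * (16 * γ - 3 * (k : ℝ) ^ 2)) := by ring
  set A := 10 * γ - 3 * (k : ℝ) ^ 2
  set B := 16 * γ - 3 * (k : ℝ) ^ 2
  set c := 48 * γ * (1 - 2 * (q : ℝ) - (q : ℝ) ^ 2) with hc
  set x := (c + √(c ^ 2 + 4 * (A * B))) / (2 * A)
  have hx : 0 < x := div_pos (add_sqrt_sq_add_mul_pos hA hB c) (by positivity)
  have ht : tseq q = √x := by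
    rw [htseq q hq, hdisc, one_div_sqrt_mul_sqrt (by positivity)]
  have hroot := quadratic_eq_zero_at_pos_root hA.ne' B c (sq_sqrt (by positivity))
  rw [hscal _ (ht ▸ sqrt_pos.2 hx), ht, sq_sqrt hx.le,
    neg_mul_div_add_div_mul_add_eq_of_quadratic_eq_zero hx.ne' hroot, hc]
  field_simp
  ring

/-- At each degeneracy instant `t_q`, one has `scal_g(t_q)/6 = q(q+2)/3`. -/
theorem aloff_wallach_scal_at_degeneracy (k l : ℤ) (hkl : k > l) (hl : 0 < l)
    (hgcd : Int.gcd k l = 1)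
    (γ : ℝ) (hγ : γ = (k : ℝ) ^ 2 + (k : ℝ) * (l : ℝ) + (l : ℝ) ^ 2)
    (scal_g : ℝ → ℝ)
    (hscal : ∀ t > 0, scal_g t =
      -((10 * γ - 3 * (k : ℝ) ^ 2) * t ^ 2) / (24 * γ) +
        (16 * γ - 3 * (k : ℝ) ^ 2) / (24 * γ * t ^ 2) + 2)
    (tseq : ℕ → ℝ)
    (htseq : ∀ q : ℕ, 1 ≤ q → tseq q =
      (1 / Real.sqrt (2 * (10 * γ - 3 * (k : ℝ) ^ 2))) *
        Real.sqrt (48 * γ * (1 - 2 * (q : ℝ) - (q : ℝ) ^ 2) +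
          Real.sqrt ((48 * γ) ^ 2 * (1 - 2 * (q : ℝ) - (q : ℝ) ^ 2) ^ 2 -
            4 * (3 * (k : ℝ) ^ 2 - 10 * γ) * (16 * γ - 3 * (k : ℝ) ^ 2)))) :
    ∀ q : ℕ, 1 ≤ q → scal_g (tseq q) / 6 = (q : ℝ) * ((q : ℝ) + 2) / 3 :=
  aloff_wallach_scal_at_degeneracy_general k l hl γ hγ scal_g hscal tseq htseq
end

section
/- The sequence (t_q)_{q≥1} satisfies: t₁ = sqrt(3 + sqrt(10)); the sequence is strictly decreasing; 0 < t_q ≤ sqrt(3 + sqrt(10)) for every q ≥ 1; and t_q → 0 as q → ∞. -/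
private lemma sq36_pos (A : ℝ) : 0 < A + Real.sqrt (A ^ 2 + 36) := by
  have h1 : |A| < Real.sqrt (A ^ 2 + 36) := by
    rw [← Real.sqrt_sq_eq_abs]
    exact Real.sqrt_lt_sqrt (sq_nonneg A) (by linarith)
  have := (abs_lt.mp h1).1
  linarith

private lemma sq36_mono {A B : ℝ} (h : A < B) :
    A + Real.sqrt (A ^ 2 + 36) < B + Real.sqrt (B ^ 2 + 36) := by
  have hA := sq36_pos A
  have hB := sq36_pos B
  have hsA : Real.sqrt (A ^ 2 + 36) ^ 2 = A ^ 2 + 36 :=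
    Real.sq_sqrt (by positivity)
  have hsB : Real.sqrt (B ^ 2 + 36) ^ 2 = B ^ 2 + 36 :=
    Real.sq_sqrt (by positivity)
  nlinarith [Real.sqrt_nonneg (A ^ 2 + 36), Real.sqrt_nonneg (B ^ 2 + 36),
    mul_pos hA hB]

/-- The degeneracy instants `t_q` of the canonical variation `k_t` on
`W⁷_{1,1}` satisfy `t₁ = √(3 + √10)`, they are strictly decreasing,
`0 < t_q ≤ √(3 + √10)`, and `t_q → 0`. -/
theorem aloff_wallach_W11_degeneracy_seq
    (tseq : ℕ → ℝ)
    (htseq : ∀ q : ℕ, 1 ≤ q → tseq q =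
      Real.sqrt ((24 - 4 * (q : ℝ) - 2 * (q : ℝ) ^ 2 +
        Real.sqrt ((-2 * (q : ℝ) ^ 2 - 4 * (q : ℝ) + 24) ^ 2 + 36)) / 6)) :
    tseq 1 = Real.sqrt (3 + Real.sqrt 10) ∧
      (∀ q p : ℕ, 1 ≤ q → q < p → tseq p < tseq q) ∧
      (∀ q : ℕ, 1 ≤ q → 0 < tseq q ∧ tseq q ≤ Real.sqrt (3 + Real.sqrt 10)) ∧
      Filter.Tendsto tseq Filter.atTop (nhds 0) := by
  -- rewrite tseq in terms of A_q := 24 - 4q - 2q²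
  have hform : ∀ q : ℕ, 1 ≤ q → tseq q =
      Real.sqrt (((24 - 4 * (q : ℝ) - 2 * (q : ℝ) ^ 2) +
        Real.sqrt ((24 - 4 * (q : ℝ) - 2 * (q : ℝ) ^ 2) ^ 2 + 36)) / 6) := by
    intro q hq
    rw [htseq q hq]
    congr 3
    ring
  have hApos : ∀ q : ℕ, 0 < (24 - 4 * (q : ℝ) - 2 * (q : ℝ) ^ 2) +
      Real.sqrt ((24 - 4 * (q : ℝ) - 2 * (q : ℝ) ^ 2) ^ 2 + 36) :=
    fun q => sq36_pos _
  -- value at 1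
  have h1 : tseq 1 = Real.sqrt (3 + Real.sqrt 10) := by
    rw [hform 1 le_rfl]
    congr 1
    have h360 : Real.sqrt ((24 - 4 * ((1:ℕ) : ℝ) - 2 * ((1:ℕ) : ℝ) ^ 2) ^ 2 + 36)
        = 6 * Real.sqrt 10 := by
      rw [show ((24 - 4 * ((1:ℕ) : ℝ) - 2 * ((1:ℕ) : ℝ) ^ 2) ^ 2 + 36) = 6 ^ 2 * 10 by
        norm_num, Real.sqrt_mul (by positivity), Real.sqrt_sq (by norm_num : (0:ℝ) ≤ 6)]
    rw [h360]
    push_cast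
    ring
  -- strict monotonicity
  have hmono : ∀ q p : ℕ, 1 ≤ q → q < p → tseq p < tseq q := by
    intro q p hq hqp
    rw [hform q hq, hform p (hq.trans hqp.le)]
    apply Real.sqrt_lt_sqrt (div_nonneg (hApos p).le (by norm_num))
    have hAlt : (24 - 4 * (p : ℝ) - 2 * (p : ℝ) ^ 2) <
        (24 - 4 * (q : ℝ) - 2 * (q : ℝ) ^ 2) := by
      have hpq : (q : ℝ) < p := by exact_mod_cast hqp
      have hq0 : (0 : ℝ) ≤ q := Nat.cast_nonneg q
      nlinarith
    have := sq36_mono hAlt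
    linarith
  -- positivity and bound
  have hposb : ∀ q : ℕ, 1 ≤ q → 0 < tseq q ∧ tseq q ≤ Real.sqrt (3 + Real.sqrt 10) := by
    intro q hq
    constructor
    · rw [hform q hq]
      exact Real.sqrt_pos.mpr (div_pos (hApos q) (by norm_num))
    · rcases eq_or_lt_of_le hq with h | h
      · subst h
        exact h1.le
      · rw [← h1]
        exact (hmono 1 q le_rfl h).le
  refine ⟨h1, hmono, hposb, ?_⟩
  -- limit: squeeze between 0 and √3 / q
  apply squeeze_zero' (g := fun q : ℕ => Real.sqrt 3 / q)
  · filter_upwards [Filter.eventually_ge_atTop 1] with q hq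
    exact (hposb q hq).1.le
  · filter_upwards [Filter.eventually_ge_atTop 4] with q hq
    have hq1 : 1 ≤ q := by omega
    have hq4 : (4 : ℝ) ≤ q := by exact_mod_cast hq
    have hq0 : (0 : ℝ) < q := by linarith
    rw [hform q hq1]
    set A : ℝ := 24 - 4 * (q : ℝ) - 2 * (q : ℝ) ^ 2 with hA
    have hs2 : Real.sqrt (A ^ 2 + 36) ^ 2 = A ^ 2 + 36 := Real.sq_sqrt (by positivity)
    have hpos := sq36_pos A
    have hle : (A + Real.sqrt (A ^ 2 + 36)) / 6 ≤ 3 / (q : ℝ) ^ 2 := by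
      rw [div_le_div_iff₀ (by norm_num) (by positivity)]
      have hsA : Real.sqrt (A ^ 2 + 36) - A ≥ 2 * (q : ℝ) ^ 2 := by
        have : -A ≤ Real.sqrt (A ^ 2 + 36) := by linarith
        nlinarith
      nlinarith [mul_le_mul_of_nonneg_left hsA hpos.le]
    calc Real.sqrt ((A + Real.sqrt (A ^ 2 + 36)) / 6)
        ≤ Real.sqrt (3 / (q : ℝ) ^ 2) := Real.sqrt_le_sqrt hle
      _ = Real.sqrt 3 / q := by
          rw [Real.sqrt_div (by norm_num : (0:ℝ) ≤ 3),
            Real.sqrt_sq hq0.le]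
  · exact tendsto_const_div_atTop_nhds_zero_nat (Real.sqrt 3)
end
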